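/- Let W : GL⁺(2) → ℝ be objective, isotropic and isochoric, and let z : [1,∞) → ℝ be the function defined by z(r) = W(diag(r + √(r² − 1), 1)), so that W(F) = z(‖F‖²/(2·det F)) for all F ∈ GL⁺(2) (Frobenius norm). If z is twice continuously differentiable, then the following are equivalent: (i) W is polyconvex; (ii) W is rank-one convex; (iii) (r² − 1)·(r + √(r² − 1))·z''(r) + z'(r) ≥ 0 for all r > 1. -/

import Mathlib

open Matrix Set

noncomputable section

/-- The space of real 2×2 matrices. -/
abbrev Mat2 : Type := Matrix (Fin 2) (Fin 2) ℝ

/-- The special orthogonal group SO(2): orthogonal 2×2 matrices with determinant 1. -/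
def SO2 : Set Mat2 := {Q : Mat2 | Qᵀ * Q = 1 ∧ Q.det = 1}

/-- A function `W` (viewed on GL⁺(2) = {F | 0 < det F}) is polyconvex if there is a
convex function `P : ℝ^{2×2} × ℝ → ℝ ∪ {+∞}` with `W F = P (F, det F)` on GL⁺(2). -/
def Polyconvex (W : Mat2 → ℝ) : Prop :=
  ∃ P : Mat2 × ℝ → EReal,
    (∀ x y : Mat2 × ℝ, ∀ a b : ℝ, 0 ≤ a → 0 ≤ b → a + b = 1 →
      P (a • x + b • y) ≤ (a : EReal) * P x + (b : EReal) * P y) ∧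
    (∀ F : Mat2, 0 < F.det → (W F : EReal) = P (F, F.det))

/-- Rank-one convexity of `W` on GL⁺(2): convexity along rank-one line segments
lying in GL⁺(2). -/
def RankOneConvex (W : Mat2 → ℝ) : Prop :=
  ∀ F : Mat2, 0 < F.det → ∀ ξ η : Fin 2 → ℝ, ∀ θ : ℝ, θ ∈ Set.Icc (0:ℝ) 1 →
    (∀ t ∈ Set.Icc (0:ℝ) 1, 0 < (F + t • vecMulVec ξ η).det) →
    W (F + (1 - θ) • vecMulVec ξ η) ≤ θ * W F + (1 - θ) * W (F + vecMulVec ξ η)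

/-- Objectivity and isotropy: bi-SO(2)-invariance on GL⁺(2). -/
def ObjectiveIsotropic (W : Mat2 → ℝ) : Prop :=
  ∀ F : Mat2, 0 < F.det → ∀ Q₁ Q₂ : Mat2, Q₁ ∈ SO2 → Q₂ ∈ SO2 →
    W (Q₁ * F * Q₂) = W F

/-- Isochoric: invariance under positive scaling on GL⁺(2). -/
def Isochoric (W : Mat2 → ℝ) : Prop :=
  ∀ F : Mat2, 0 < F.det → ∀ a : ℝ, 0 < a → W (a • F) = W F

/-- The 2×2 diagonal matrix diag(a, b). -/
def diag2 (a b : ℝ) : Mat2 := !![a, 0; 0, b]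

/-- The squared Frobenius norm of a 2×2 matrix. -/
def frobSq (F : Mat2) : ℝ := ∑ i, ∑ j, (F i j) ^ 2

/-- The operator norm of `F` induced by the Euclidean norm on ℝ²:
the supremum of ‖F·x‖ over Euclidean-unit vectors x. -/
def opNorm2 (F : Mat2) : ℝ :=
  sSup {r : ℝ | ∃ x : Fin 2 → ℝ, (x 0) ^ 2 + (x 1) ^ 2 = 1 ∧
    r = Real.sqrt ((F.mulVec x 0) ^ 2 + (F.mulVec x 1) ^ 2)}

/-
Along the diagonal matrices `diag(s, 1)`, `s ≥ 1`, the energy is `h(s) = z((s² + 1)/(2s))`, and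
condition (iii) at `r = (s² + 1)/(2s)` reads exactly `s³ h''(s) ≥ 0`.

(i) ⇒ (ii): `det` is affine along rank-one lines, so a convex function of `(F, det F)` is convex
along them. (ii) ⇒ (iii): the diagonal matrices form a rank-one line, so `h` is convex.
(iii) ⇒ (i): `h` is convex on `[1, ∞)`, and nondecreasing because `h'(1) = 0`. If `det F > 0`,
then `‖F‖² / det F` (operator norm) is the ratio `s ≥ 1` of the singular values of `F`, so
`W F = h(‖F‖² / det F)`. The perspective `(F, δ) ↦ ‖F‖² / δ` of the squared norm is convex on
`δ > 0`; composed with the convex nondecreasing `u ↦ h(max u 1)` and extended by `+∞` to `δ ≤ 0`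
it is a convex representative of `W`.
-/

open scoped Matrix.Norms.L2Operator

theorem ConvexOn.deriv2_nonneg {f : ℝ → ℝ} {s : Set ℝ} (hf : ConvexOn ℝ s f) (hs : IsOpen s)
    (hd : DifferentiableOn ℝ f s) {x : ℝ} (hx : x ∈ s) : 0 ≤ deriv (deriv f) x := by
  rw [← derivWithin_of_isOpen hs hx]
  exact (hf.monotoneOn_deriv fun y hy => hd.differentiableAt (hs.mem_nhds hy)).derivWithin_nonneg

theorem ConvexOn.monotoneOn_of_hasDerivWithinAt_nonneg {f : ℝ → ℝ} {a f' : ℝ}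
    (hf : ConvexOn ℝ (Ici a) f) (hd : HasDerivWithinAt f f' (Ici a) a) (hf' : 0 ≤ f') :
    MonotoneOn f (Ici a) := by
  intro x hx y hy hxy
  rcases hxy.eq_or_lt with rfl | hxy
  · rfl
  have hslope : 0 ≤ slope f x y := by
    rcases (mem_Ici.1 hx).eq_or_lt with rfl | hax
    · exact hf'.trans (hf.le_slope_of_hasDerivWithinAt self_mem_Ici hy hxy hd)
    · refine hf'.trans ((hf.le_slope_of_hasDerivWithinAt self_mem_Ici hx hax hd).trans ?_)
      simpa [slope_def_field] using hf.slope_mono_adjacent self_mem_Ici hy hax hxy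
  rw [slope_def_field, le_div_iff₀ (sub_pos.2 hxy), zero_mul, sub_nonneg] at hslope
  exact hslope

theorem ConvexOn.comp_max_const {f : ℝ → ℝ} {c : ℝ} (hf : ConvexOn ℝ (Ici c) f)
    (hm : MonotoneOn f (Ici c)) : ConvexOn ℝ univ (fun u => f (max u c)) := by
  have himage : (fun u => max u c) '' univ = Ici c := by
    ext x
    simp only [image_univ, mem_range, mem_Ici]
    exact ⟨fun ⟨u, hu⟩ => hu ▸ le_max_right u c, fun hx => ⟨x, max_eq_left hx⟩⟩
  exact (himage ▸ hf).comp ((convexOn_id convex_univ).sup (convexOn_const c convex_univ))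
    (himage ▸ hm)

theorem MonotoneOn.comp_max_const {f : ℝ → ℝ} {c : ℝ} (hm : MonotoneOn f (Ici c)) :
    Monotone (fun u => f (max u c)) :=
  fun _ _ huv => hm (mem_Ici.2 (le_max_right _ _)) (mem_Ici.2 (le_max_right _ _))
    (max_le_max_right c huv)

lemma convexOn_sq_norm_div {E : Type*} [SeminormedAddCommGroup E] [NormedSpace ℝ E] :
    ConvexOn ℝ {p : E × ℝ | 0 < p.2} (fun p => ‖p.1‖ ^ 2 / p.2) := by
  refine ⟨(convex_Ioi 0).linear_preimage (LinearMap.snd ℝ E ℝ), ?_⟩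
  rintro ⟨x, δ⟩ (hδ : 0 < δ) ⟨y, ε⟩ (hε : 0 < ε) a b ha hb hab
  simp only [Prod.smul_mk, Prod.mk_add_mk, smul_eq_mul]
  have hsum : 0 < a * δ + b * ε := by
    nlinarith [mul_le_mul_of_nonneg_left (min_le_left δ ε) ha,
      mul_le_mul_of_nonneg_left (min_le_right δ ε) hb, lt_min hδ hε]
  have hnorm : ‖a • x + b • y‖ ≤ a * ‖x‖ + b * ‖y‖ := by
    refine (norm_add_le _ _).trans_eq ?_
    rw [norm_smul, norm_smul, Real.norm_of_nonneg ha, Real.norm_of_nonneg hb]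
  obtain ⟨p, hp⟩ : ∃ p, ‖x‖ = p * δ := ⟨‖x‖ / δ, by field_simp⟩
  obtain ⟨q, hq⟩ : ∃ q, ‖y‖ = q * ε := ⟨‖y‖ / ε, by field_simp⟩
  calc ‖a • x + b • y‖ ^ 2 / (a * δ + b * ε)
      ≤ (a * ‖x‖ + b * ‖y‖) ^ 2 / (a * δ + b * ε) := by gcongr
    _ ≤ a * (‖x‖ ^ 2 / δ) + b * (‖y‖ ^ 2 / ε) := by
      rw [hp, hq, div_le_iff₀ hsum]
      field_simp
      -- Cauchy–Schwarz: the gap is `a b δ ε (p - q)²`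
      nlinarith [mul_nonneg (mul_nonneg (mul_nonneg ha hb) (mul_nonneg hδ.le hε.le))
        (sq_nonneg (p - q))]

open Classical in
def extendTop {E : Type*} (s : Set E) (f : E → ℝ) (x : E) : EReal := if x ∈ s then f x else ⊤

lemma ConvexOn.extendTop_le {E : Type*} [AddCommGroup E] [Module ℝ E] {s : Set E} {f : E → ℝ}
    (hf : ConvexOn ℝ s f) {x y : E} {a b : ℝ} (ha : 0 ≤ a) (hb : 0 ≤ b) (hab : a + b = 1) :
    extendTop s f (a • x + b • y) ≤ a * extendTop s f x + b * extendTop s f y := by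
  rcases ha.eq_or_lt with rfl | ha
  · obtain rfl : b = 1 := by linarith
    simp
  rcases hb.eq_or_lt with rfl | hb
  · obtain rfl : a = 1 := by linarith
    simp
  by_cases hx : x ∈ s <;> by_cases hy : y ∈ s
  · simp only [extendTop, hx, hy, hf.1 hx hy ha.le hb.le hab, if_true]
    exact_mod_cast hf.2 hx hy ha.le hb.le hab
  all_goals
    simp [extendTop, hx, hy, EReal.mul_top_of_pos (EReal.coe_pos.2 ha),
      EReal.mul_top_of_pos (EReal.coe_pos.2 hb), ← EReal.coe_mul]

lemma frobSq_eq (F : Mat2) : frobSq F = F 0 0 ^ 2 + F 0 1 ^ 2 + F 1 0 ^ 2 + F 1 1 ^ 2 := by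
  simp only [frobSq, Fin.sum_univ_two]
  ring

lemma abs_two_mul_det_le_frobSq (F : Mat2) : |2 * F.det| ≤ frobSq F := by
  rw [frobSq_eq, det_fin_two, abs_le]
  constructor
  · nlinarith [sq_nonneg (F 0 0 + F 1 1), sq_nonneg (F 0 1 - F 1 0)]
  · nlinarith [sq_nonneg (F 0 0 - F 1 1), sq_nonneg (F 0 1 + F 1 0)]

lemma det_diag2 (a b : ℝ) : (diag2 a b).det = a * b := by
  simp [diag2, det_fin_two]

lemma frobSq_diag2 (a b : ℝ) : frobSq (diag2 a b) = a ^ 2 + b ^ 2 := by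
  simp [frobSq_eq, diag2]

lemma det_add_smul_vecMulVec (F : Mat2) (ξ η : Fin 2 → ℝ) (t : ℝ) :
    (F + t • vecMulVec ξ η).det = (1 - t) * F.det + t * (F + vecMulVec ξ η).det := by
  simp only [det_fin_two, Matrix.add_apply, Matrix.smul_apply, vecMulVec_apply, smul_eq_mul]
  ring

section LargestSingularValue

variable {F : Mat2} {μ : ℝ}

/- `μ • 1 - Fᵀ * F = !![a, b; b, c]` has trace `2μ - ‖F‖²_F ≥ 0` and determinant
`μ² - ‖F‖²_F μ + (det F)² = 0`, hence is positive semidefinite. -/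
lemma sq_mulVec_le (hμ : μ ^ 2 - frobSq F * μ + F.det ^ 2 = 0) (hμ' : frobSq F ≤ 2 * μ)
    (v : Fin 2 → ℝ) : (F *ᵥ v) 0 ^ 2 + (F *ᵥ v) 1 ^ 2 ≤ μ * (v 0 ^ 2 + v 1 ^ 2) := by
  set a := μ - (F 0 0 ^ 2 + F 1 0 ^ 2)
  set b := -(F 0 0 * F 0 1 + F 1 0 * F 1 1)
  set c := μ - (F 0 1 ^ 2 + F 1 1 ^ 2)
  have hdet : a * c = b ^ 2 := by
    rw [frobSq_eq, det_fin_two] at hμ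
    linear_combination hμ
  have htr : 0 ≤ a + c := by rw [frobSq_eq] at hμ'; linarith
  have ha : 0 ≤ a := by nlinarith [sq_nonneg b]
  have hform : 0 ≤ a * v 0 ^ 2 + 2 * b * v 0 * v 1 + c * v 1 ^ 2 := by
    rcases ha.eq_or_lt with ha0 | ha0
    · have hb : b = 0 := by nlinarith
      rw [← ha0, hb]; nlinarith [sq_nonneg (v 1)]
    · nlinarith [sq_nonneg (a * v 0 + b * v 1)]
  simp only [mulVec, dotProduct, Fin.sum_univ_two]
  linear_combination hform

lemma exists_sq_mulVec_eq (hμ : μ ^ 2 - frobSq F * μ + F.det ^ 2 = 0) :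
    ∃ v : Fin 2 → ℝ, v ≠ 0 ∧ (F *ᵥ v) 0 ^ 2 + (F *ᵥ v) 1 ^ 2 = μ * (v 0 ^ 2 + v 1 ^ 2) := by
  set a := μ - (F 0 0 ^ 2 + F 1 0 ^ 2)
  set b := -(F 0 0 * F 0 1 + F 1 0 * F 1 1)
  rw [frobSq_eq, det_fin_two] at hμ
  simp only [mulVec, dotProduct, Fin.sum_univ_two]
  by_cases hab : a = 0 ∧ b = 0
  · refine ⟨![1, 0], by simp, ?_⟩
    simp only [Matrix.cons_val_zero, Matrix.cons_val_one]
    linear_combination -hab.1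
  · refine ⟨![b, -a], fun h => hab ⟨?_, ?_⟩, ?_⟩
    · simpa using congrFun h 1
    · simpa using congrFun h 0
    · simp only [Matrix.cons_val_zero, Matrix.cons_val_one]
      linear_combination (-a) * hμ

lemma l2_opNorm_sq_eq (hμ : μ ^ 2 - frobSq F * μ + F.det ^ 2 = 0) (hμ' : frobSq F ≤ 2 * μ) :
    ‖F‖ ^ 2 = μ := by
  have hnormsq (x : EuclideanSpace ℝ (Fin 2)) : ‖x‖ ^ 2 = x 0 ^ 2 + x 1 ^ 2 := by
    simp only [EuclideanSpace.norm_sq_eq, Fin.sum_univ_two, Real.norm_eq_abs, sq_abs]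
  have hμ0 : 0 ≤ μ := by linarith [(abs_nonneg _).trans (abs_two_mul_det_le_frobSq F)]
  rw [← l2_opNorm_toEuclideanCLM]
  set T := toEuclideanCLM (n := Fin 2) (𝕜 := ℝ) F
  apply le_antisymm
  · have hle : ‖T‖ ≤ √μ := by
      refine T.opNorm_le_bound (Real.sqrt_nonneg μ) fun x ↦ ?_
      refine (sq_le_sq₀ (norm_nonneg _) (by positivity)).mp ?_
      rw [mul_pow, Real.sq_sqrt hμ0, hnormsq, hnormsq]
      simpa only [T, ofLp_toEuclideanCLM] using sq_mulVec_le hμ hμ' x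
    calc ‖T‖ ^ 2 ≤ √μ ^ 2 := pow_le_pow_left₀ (norm_nonneg _) hle 2
      _ = μ := Real.sq_sqrt hμ0
  · obtain ⟨v, hv0, hv⟩ := exists_sq_mulVec_eq hμ
    have hpos : 0 < v 0 ^ 2 + v 1 ^ 2 := by
      have : (WithLp.toLp 2 v : EuclideanSpace ℝ (Fin 2)) ≠ 0 := by simpa using hv0
      simpa [hnormsq] using pow_pos (norm_pos_iff.mpr this) 2
    have hle := pow_le_pow_left₀ (norm_nonneg _) (T.le_opNorm (WithLp.toLp 2 v)) 2
    rw [mul_pow, hnormsq, hnormsq] at hle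
    simp only [T, ofLp_toEuclideanCLM] at hle
    rw [hv] at hle
    exact le_of_mul_le_mul_right hle hpos

end LargestSingularValue

lemma l2_opNorm_sq_quadratic (F : Mat2) :
    (‖F‖ ^ 2) ^ 2 - frobSq F * ‖F‖ ^ 2 + F.det ^ 2 = 0 ∧ frobSq F ≤ 2 * ‖F‖ ^ 2 := by
  set D := frobSq F ^ 2 - 4 * F.det ^ 2
  have hD : 0 ≤ D := by
    have h := abs_two_mul_det_le_frobSq F
    nlinarith [abs_nonneg (2 * F.det), sq_abs (2 * F.det)]
  have hμ : ((frobSq F + √D) / 2) ^ 2 - frobSq F * ((frobSq F + √D) / 2) + F.det ^ 2 = 0 := by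
    linear_combination (1 / 4) * Real.sq_sqrt hD
  have hμ' : frobSq F ≤ 2 * ((frobSq F + √D) / 2) := by linarith [Real.sqrt_nonneg D]
  rw [l2_opNorm_sq_eq hμ hμ']
  exact ⟨hμ, hμ'⟩

theorem Polyconvex.rankOneConvex {W : Mat2 → ℝ} (hW : Polyconvex W) : RankOneConvex W := by
  obtain ⟨P, hPconv, hPW⟩ := hW
  intro F hF ξ η θ hθ hdet
  set G := F + vecMulVec ξ η
  have hG : 0 < G.det := by simpa using hdet 1 ⟨zero_le_one, le_rfl⟩
  have hθ' : θ • (F, F.det) + (1 - θ) • (G, G.det)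
      = (F + (1 - θ) • vecMulVec ξ η, (F + (1 - θ) • vecMulVec ξ η).det) := by
    rw [det_add_smul_vecMulVec]
    ext : 1
    · simp only [Prod.fst_add, Prod.smul_fst, G, smul_add]
      module
    · simp only [Prod.snd_add, Prod.smul_snd, smul_eq_mul]
      ring
  have h := hPconv (F, F.det) (G, G.det) θ (1 - θ) hθ.1 (by linarith [hθ.2]) (by ring)
  rw [hθ', ← hPW F hF, ← hPW G hG, ← hPW _ (hdet _ ⟨by linarith [hθ.2], by linarith [hθ.1]⟩)] at h
  exact_mod_cast h

theorem RankOneConvex.convexOn_diag2 {W : Mat2 → ℝ} (hW : RankOneConvex W) :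
    ConvexOn ℝ (Ioi 0) (fun s => W (diag2 s 1)) := by
  refine ⟨convex_Ioi 0, fun x (hx : 0 < x) y (hy : 0 < y) a b ha hb hab => ?_⟩
  have hline (t : ℝ) :
      diag2 x 1 + t • vecMulVec ![y - x, 0] ![1, 0] = diag2 ((1 - t) * x + t * y) 1 := by
    ext i j
    fin_cases i <;> fin_cases j <;> simp [diag2]
    ring
  have hpos (t : ℝ) (ht : t ∈ Icc (0 : ℝ) 1) : 0 < (1 - t) * x + t * y := by
    nlinarith [mul_le_mul_of_nonneg_left (min_le_left x y) (sub_nonneg.2 ht.2),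
      mul_le_mul_of_nonneg_left (min_le_right x y) ht.1, lt_min hx hy]
  have h := hW (diag2 x 1) (by simpa [det_diag2] using hx) ![y - x, 0] ![1, 0] a
    ⟨ha, by linarith⟩ (fun t ht => by rw [hline, det_diag2, mul_one]; exact hpos t ht)
  rw [hline, ← one_smul ℝ (vecMulVec _ _), hline] at h
  obtain rfl : b = 1 - a := by linarith
  simpa [smul_eq_mul, sub_sub_cancel] using h

theorem Polyconvex.of_eq_comp {W : Mat2 → ℝ} {g : ℝ → ℝ} (hg : ConvexOn ℝ univ g)
    (hgm : Monotone g) (hW : ∀ F : Mat2, 0 < F.det → W F = g (‖F‖ ^ 2 / F.det)) :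
    Polyconvex W := by
  have hconv : ConvexOn ℝ {p : Mat2 × ℝ | 0 < p.2} (fun p => g (‖p.1‖ ^ 2 / p.2)) :=
    ⟨convexOn_sq_norm_div.1, fun x hx y hy a b ha hb hab =>
      (hgm (convexOn_sq_norm_div.2 hx hy ha hb hab)).trans (hg.2 trivial trivial ha hb hab)⟩
  refine ⟨extendTop _ _, fun x y a b ha hb hab => hconv.extendTop_le ha hb hab, fun F hF => ?_⟩
  simp [extendTop, hF, hW F hF]

def diagDistortion (s : ℝ) : ℝ := (s ^ 2 + 1) / (2 * s)

lemma one_lt_diagDistortion {s : ℝ} (hs : 1 < s) : 1 < diagDistortion s := by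
  rw [diagDistortion, one_lt_div (by linarith)]
  nlinarith

lemma one_le_diagDistortion {s : ℝ} (hs : 1 ≤ s) : 1 ≤ diagDistortion s := by
  rw [diagDistortion, one_le_div (by linarith)]
  nlinarith

lemma exists_one_lt_diagDistortion_eq {r : ℝ} (hr : 1 < r) : ∃ s, 1 < s ∧ diagDistortion s = r := by
  have h := Real.sq_sqrt (show 0 ≤ r ^ 2 - 1 by nlinarith)
  refine ⟨r + √(r ^ 2 - 1), by linarith [Real.sqrt_nonneg (r ^ 2 - 1)], ?_⟩
  rw [diagDistortion, div_eq_iff (by positivity)]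
  linear_combination h

lemma one_le_l2_opNorm_sq_div_det {F : Mat2} (hF : 0 < F.det) : 1 ≤ ‖F‖ ^ 2 / F.det := by
  rw [one_le_div hF]
  linarith [(l2_opNorm_sq_quadratic F).2, (le_abs_self _).trans (abs_two_mul_det_le_frobSq F)]

lemma diagDistortion_l2_opNorm_sq_div_det {F : Mat2} (hF : 0 < F.det) :
    diagDistortion (‖F‖ ^ 2 / F.det) = frobSq F / (2 * F.det) := by
  have hμ : 0 < ‖F‖ ^ 2 := by
    have := one_le_l2_opNorm_sq_div_det hF
    rw [one_le_div hF] at this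
    linarith
  have hquad := (l2_opNorm_sq_quadratic F).1
  generalize ‖F‖ ^ 2 = μ at hμ hquad ⊢
  unfold diagDistortion
  field_simp
  linear_combination hquad

lemma sqrt_diagDistortion_sq_sub_one {s : ℝ} (hs : 1 ≤ s) :
    √(diagDistortion s ^ 2 - 1) = (s ^ 2 - 1) / (2 * s) := by
  have hs0 : 0 < s := by linarith
  rw [show diagDistortion s ^ 2 - 1 = ((s ^ 2 - 1) / (2 * s)) ^ 2 by
    rw [diagDistortion]; field_simp; ring]
  have : 0 ≤ s ^ 2 - 1 := by nlinarith
  exact Real.sqrt_sq (by positivity)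

lemma hasDerivAt_diagDistortion {s : ℝ} (hs : s ≠ 0) :
    HasDerivAt diagDistortion ((s ^ 2 - 1) / (2 * s ^ 2)) s := by
  have hnum : HasDerivAt (fun u : ℝ => u ^ 2 + 1) (2 * s) s := by
    simpa using (hasDerivAt_pow 2 s).add_const 1
  have hden : HasDerivAt (fun u : ℝ => 2 * u) 2 s := by
    simpa using (hasDerivAt_id s).const_mul 2
  refine (hnum.div hden (by simpa)).congr_deriv ?_
  field_simp
  ring

lemma hasDerivAt_sq_sub_one_div_two_mul_sq {s : ℝ} (hs : s ≠ 0) :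
    HasDerivAt (fun u : ℝ => (u ^ 2 - 1) / (2 * u ^ 2)) (1 / s ^ 3) s := by
  have hnum : HasDerivAt (fun u : ℝ => u ^ 2 - 1) (2 * s) s := by
    simpa using (hasDerivAt_pow 2 s).sub_const 1
  have hden : HasDerivAt (fun u : ℝ => 2 * u ^ 2) (2 * (2 * s)) s := by
    simpa using (hasDerivAt_pow 2 s).const_mul 2
  refine (hnum.div hden (by simpa)).congr_deriv ?_
  field_simp
  ring

def diagProfile (z : ℝ → ℝ) (s : ℝ) : ℝ := z (diagDistortion s)

section DiagProfile

variable {z : ℝ → ℝ}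

lemma hasDerivAt_diagProfile (hz : DifferentiableOn ℝ z (Ioi 1)) {s : ℝ} (hs : 1 < s) :
    HasDerivAt (diagProfile z) (deriv z (diagDistortion s) * ((s ^ 2 - 1) / (2 * s ^ 2))) s :=
  (hz.differentiableAt (Ioi_mem_nhds (one_lt_diagDistortion hs))).hasDerivAt.comp s
    (hasDerivAt_diagDistortion (by positivity))

lemma differentiableOn_diagProfile (hz : DifferentiableOn ℝ z (Ioi 1)) :
    DifferentiableOn ℝ (diagProfile z) (Ioi 1) :=
  fun _ hs => (hasDerivAt_diagProfile hz hs).differentiableAt.differentiableWithinAt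

lemma hasDerivAt_deriv_diagProfile (hz : ContDiffOn ℝ 2 z (Ioi 1)) {s : ℝ} (hs : 1 < s) :
    HasDerivAt (deriv (diagProfile z))
      (deriv (deriv z) (diagDistortion s) * ((s ^ 2 - 1) / (2 * s ^ 2)) ^ 2
        + deriv z (diagDistortion s) * (1 / s ^ 3)) s := by
  have hz' : ContDiffOn ℝ 1 (deriv z) (Ioi 1) := hz.deriv_of_isOpen isOpen_Ioi (by norm_num)
  have hdz : HasDerivAt (fun u => deriv z (diagDistortion u))
      (deriv (deriv z) (diagDistortion s) * ((s ^ 2 - 1) / (2 * s ^ 2))) s :=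
    ((hz'.differentiableOn (by norm_num)).differentiableAt
      (Ioi_mem_nhds (one_lt_diagDistortion hs))).hasDerivAt.comp s
      (hasDerivAt_diagDistortion (by positivity))
  have heq : (fun u => deriv z (diagDistortion u) * ((u ^ 2 - 1) / (2 * u ^ 2)))
      =ᶠ[nhds s] deriv (diagProfile z) := by
    filter_upwards [Ioi_mem_nhds hs] with u hu
    exact (hasDerivAt_diagProfile (hz.differentiableOn (by norm_num)) hu).deriv.symm
  refine ((hdz.mul (hasDerivAt_sq_sub_one_div_two_mul_sq (by positivity))).congr_of_eventuallyEq
    heq.symm).congr_deriv ?_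
  ring

lemma cube_mul_deriv_deriv_diagProfile (hz : ContDiffOn ℝ 2 z (Ioi 1)) {s : ℝ} (hs : 1 < s) :
    s ^ 3 * deriv (deriv (diagProfile z)) s
      = (diagDistortion s ^ 2 - 1) * (diagDistortion s + √(diagDistortion s ^ 2 - 1))
          * deriv (deriv z) (diagDistortion s) + deriv z (diagDistortion s) := by
  have hs0 : 0 < s := by linarith
  rw [(hasDerivAt_deriv_diagProfile hz hs).deriv, sqrt_diagDistortion_sq_sub_one hs.le]
  unfold diagDistortion
  field_simp
  ring

lemma convexOn_diagProfile (hz : ContDiffOn ℝ 2 z (Ici 1))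
    (h : ∀ s ∈ Ioi 1, 0 ≤ deriv (deriv (diagProfile z)) s) :
    ConvexOn ℝ (Ici 1) (diagProfile z) := by
  have hz' : ContDiffOn ℝ 2 z (Ioi 1) := hz.mono Ioi_subset_Ici_self
  have hk : ContinuousOn diagDistortion (Ici 1) :=
    ContinuousOn.div (by fun_prop) (by fun_prop) fun x (hx : 1 ≤ x) => by positivity
  apply convexOn_of_deriv2_nonneg (convex_Ici 1)
    (hz.continuousOn.comp hk fun _ hx => one_le_diagDistortion hx) <;> rw [interior_Ici]
  · exact differentiableOn_diagProfile (hz'.differentiableOn (by norm_num))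
  · exact fun s hs => (hasDerivAt_deriv_diagProfile hz' hs).differentiableAt.differentiableWithinAt
  · exact h

lemma hasDerivWithinAt_diagProfile_one (hz : DifferentiableWithinAt ℝ z (Ici 1) 1) :
    HasDerivWithinAt (diagProfile z) 0 (Ici 1) 1 := by
  have hk := (hasDerivAt_diagDistortion one_ne_zero).hasDerivWithinAt (s := Ici 1)
  exact (hz.hasDerivWithinAt.comp_of_eq 1 hk (fun _ hx => one_le_diagDistortion hx)
    (by norm_num [diagDistortion])).congr_deriv (by norm_num)

end DiagProfile

theorem isochoric_tfae_distortion_general (W : Mat2 → ℝ)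
    (z : ℝ → ℝ)
    (hzW : ∀ F : Mat2, 0 < F.det → W F = z (frobSq F / (2 * F.det)))
    (hC2 : ContDiffOn ℝ 2 z (Set.Ici (1:ℝ))) :
    List.TFAE
      [Polyconvex W,
       RankOneConvex W,
       ∀ r : ℝ, 1 < r →
         0 ≤ (r ^ 2 - 1) * (r + Real.sqrt (r ^ 2 - 1)) * deriv (deriv z) r
             + deriv z r] := by
  have hz : ContDiffOn ℝ 2 z (Ioi 1) := hC2.mono Ioi_subset_Ici_self
  have hWdiag : EqOn (fun s => W (diag2 s 1)) (diagProfile z) (Ioi 0) := fun s (hs : 0 < s) => by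
    dsimp only
    rw [hzW _ (by rwa [det_diag2, mul_one]), frobSq_diag2, det_diag2, one_pow, mul_one]
    rfl
  tfae_have 1 → 2 := Polyconvex.rankOneConvex
  tfae_have 2 → 3 := by
    intro hW r hr
    obtain ⟨s, hs, rfl⟩ := exists_one_lt_diagDistortion_eq hr
    have hconv := (hW.convexOn_diag2.congr hWdiag).subset (Ioi_subset_Ioi zero_le_one)
      (convex_Ioi 1)
    rw [← cube_mul_deriv_deriv_diagProfile hz hs]
    exact mul_nonneg (by positivity) (hconv.deriv2_nonneg isOpen_Ioi
      (differentiableOn_diagProfile (hz.differentiableOn (by norm_num))) hs)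
  tfae_have 3 → 1 := by
    intro hcond
    have hconv : ConvexOn ℝ (Ici 1) (diagProfile z) := convexOn_diagProfile hC2 fun s hs => by
      have h := hcond _ (one_lt_diagDistortion hs)
      rw [← cube_mul_deriv_deriv_diagProfile hz hs] at h
      exact (mul_nonneg_iff_of_pos_left (pow_pos (zero_lt_one.trans hs) 3)).1 h
    have hmono := hconv.monotoneOn_of_hasDerivWithinAt_nonneg
      (hasDerivWithinAt_diagProfile_one (hC2.differentiableOn (by norm_num) 1 self_mem_Ici)) le_rfl
    refine Polyconvex.of_eq_comp (hconv.comp_max_const hmono) hmono.comp_max_const fun F hF => ?_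
    rw [hzW F hF, max_eq_left (one_le_l2_opNorm_sq_div_det hF), diagProfile,
      diagDistortion_l2_opNorm_sq_div_det hF]
  tfae_finish

/-- for objective, isotropic, isochoric `W` with
`z(r) = W(diag(r + √(r²−1), 1))`, so that `W F = z(‖F‖²/(2 det F))` on GL⁺(2),
and `z` twice continuously differentiable on `[1,∞)`:
polyconvexity, rank-one convexity and `(r²−1)(r+√(r²−1))z''(r) + z'(r) ≥ 0`
for all `r > 1` are equivalent. -/
theorem isochoric_tfae_distortion (W : Mat2 → ℝ)
    (hOI : ObjectiveIsotropic W) (hIso : Isochoric W)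
    (z : ℝ → ℝ) (hz : ∀ r : ℝ, z r = W (diag2 (r + Real.sqrt (r ^ 2 - 1)) 1))
    (hzW : ∀ F : Mat2, 0 < F.det → W F = z (frobSq F / (2 * F.det)))
    (hC2 : ContDiffOn ℝ 2 z (Set.Ici (1:ℝ))) :
    List.TFAE
      [Polyconvex W,
       RankOneConvex W,
       ∀ r : ℝ, 1 < r →
         0 ≤ (r ^ 2 - 1) * (r + Real.sqrt (r ^ 2 - 1)) * deriv (deriv z) r
             + deriv z r] :=
  isochoric_tfae_distortion_general W z hzW hC2
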